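/- Let n ≥ 2, τ ∈ (−1,1), X a measurable space, and D a probability measure on X × [n]. Then for every measurable f : X → R^n, er^ℓ_D[pred^OVA_τ ∘ f] − er^{ℓ,*}_D ≤ ( er^{ψ^OVA}_D[f] − er^{ψ^OVA,*}_D ) / ( 2(1 − |τ|) ), where ℓ = ℓ^{1/2} is the abstain(1/2) loss and pred^OVA_τ is a fixed measurable tie-breaking choice. -/

import Mathlib

open scoped BigOperators
open MeasureTheory

/-- The abstain(1/2) loss is `abstainLoss n (1/2)`. -/
noncomputable def abstainLoss (n : ℕ) (α : ℝ) (y : Fin n) (t : Fin (n + 1)) : ℝ :=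
  if t = Fin.last n then α else if (t : ℕ) = (y : ℕ) then 0 else 1

/-- One-vs-all hinge surrogate: `ψ^OVA(y,u) = (1 − u_y)_+ + Σ_{i≠y} (1 + u_i)_+`. -/
noncomputable def psiOVA (n : ℕ) (y : Fin n) (u : Fin n → ℝ) : ℝ :=
  max (1 - u y) 0 + ∑ i ∈ Finset.univ.erase y, max (1 + u i) 0

/-- `pred^OVA_τ`: the smallest index attaining `max_i u_i` if `max_j u_j > τ`,
and `n+1` otherwise. -/
noncomputable def predOVA (n : ℕ) (τ : ℝ) (u : Fin n → ℝ) : Fin (n + 1) :=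
  if h : ∃ y : Fin n, (∀ i, u i ≤ u y) ∧ τ < u y then
    Fin.castSucc ((Finset.univ.filter fun y : Fin n => (∀ i, u i ≤ u y) ∧ τ < u y).min'
      (by obtain ⟨y, hy⟩ := h; exact ⟨y, by simpa using hy⟩))
  else Fin.last n

/-! Conditionally on `x`, with label probabilities `q`, the `ψ^OVA`-risk of a score `u` splits
into `n` binary hinge risks `q_i (1 - u_i)_+ + (1 - q_i) (1 + u_i)_+`. Each is minimised at
`u_i = ±1` according as `q_i > 1/2`, and its regret at `u_i` is at least `|s_i| - c_i s_i`, where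
`s_i = 2 q_i - 1` and `c_i` is `u_i` clamped to `[-1, 1]`. Clamping preserves all that
`pred^OVA_τ` looks at, and comparing its output with any other `t` involves at most two labels;
in each case `2 (1 - |τ|)` times the abstain regret is bounded by the corresponding one or two
of these gaps. Integrating this pointwise inequality along the disintegration of `D`, with the
conditionally optimal `±1` score as competitor, gives the bound. -/

open scoped ENNReal

lemma lintegral_ofReal_eq_ofReal_sum {Y : Type*} [Fintype Y] [MeasurableSpace Y]
    [MeasurableSingletonClass Y] (P : Measure Y) [IsFiniteMeasure P] {F : Y → ℝ}
    (hF : ∀ y, 0 ≤ F y) :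
    ∫⁻ y, ENNReal.ofReal (F y) ∂P = ENNReal.ofReal (∑ y, P.real {y} * F y) := by
  rw [lintegral_fintype,
    ENNReal.ofReal_sum_of_nonneg fun y _ => mul_nonneg measureReal_nonneg (hF y)]
  refine Finset.sum_congr rfl fun y _ => ?_
  rw [ENNReal.ofReal_mul measureReal_nonneg, ofReal_measureReal, mul_comm]

lemma ENNReal.sub_iInf_le_div_of_add_mul_le {ι : Sort*} {a c d K : ℝ≥0∞}
    {b : ι → ℝ≥0∞} (hd : d ≠ ∞) (hK0 : K ≠ 0) (hK : K ≠ ∞)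
    (h : ∀ i, d + K * a ≤ c + K * b i) :
    a - ⨅ i, b i ≤ (c - d) / K := by
  rw [ENNReal.le_div_iff_mul_le (.inl hK0) (.inl hK), ENNReal.sub_mul fun _ _ => hK,
    tsub_le_iff_right, ENNReal.iInf_mul_of_ne hK0 hK, ENNReal.add_iInf]
  refine le_iInf fun i => ?_
  calc a * K ≤ c + K * b i - d := ENNReal.le_sub_of_add_le_left hd (mul_comm a K ▸ h i)
    _ ≤ c - d + b i * K := by rw [mul_comm]; exact add_tsub_le_tsub_add

lemma Measurable.loss_comp {X Y V W : Type*} [MeasurableSpace X] [MeasurableSpace Y]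
    [MeasurableSpace V] [MeasurableSpace W] {L : Y → V → W}
    (hL : Measurable (Function.uncurry L)) {g : X → V} (hg : Measurable g) :
    Measurable fun z : X × Y => L z.2 (g z.1) :=
  hL.comp (measurable_snd.prodMk (hg.comp measurable_fst))

theorem excess_risk_le_div_of_pointwise {X Y T U : Type*} [MeasurableSpace X]
    [MeasurableSpace Y] [StandardBorelSpace Y] [MeasurableSpace T] [MeasurableSpace U]
    (D : Measure (X × Y)) [IsProbabilityMeasure D] (ℓ : Y → T → ℝ≥0∞) (ψ : Y → U → ℝ≥0∞)
    (hℓ : Measurable (Function.uncurry ℓ)) (hψ : Measurable (Function.uncurry ψ))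
    (pred : U → T) (hpred : Measurable pred)
    (opt : Measure Y → U) (hopt : Measurable opt) {C : ℝ≥0∞} (hC : C ≠ ∞)
    (hψopt : ∀ y P, ψ y (opt P) ≤ C) {K : ℝ≥0∞} (hK0 : K ≠ 0) (hK : K ≠ ∞)
    (hcal : ∀ (P : Measure Y) [IsProbabilityMeasure P] (u : U) (t : T),
      ∫⁻ y, ψ y (opt P) ∂P + K * ∫⁻ y, ℓ y (pred u) ∂P ≤
        ∫⁻ y, ψ y u ∂P + K * ∫⁻ y, ℓ y t ∂P)
    (f : X → U) (hf : Measurable f) :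
    (∫⁻ z, ℓ z.2 (pred (f z.1)) ∂D) -
        (⨅ h : {h : X → T // Measurable h}, ∫⁻ z, ℓ z.2 (h.1 z.1) ∂D) ≤
      ((∫⁻ z, ψ z.2 (f z.1) ∂D) -
        (⨅ g : {g : X → U // Measurable g}, ∫⁻ z, ψ z.2 (g.1 z.1) ∂D)) / K := by
  have : Nonempty Y := (nonempty_of_isProbabilityMeasure D).map Prod.snd
  set g₀ : X → U := fun x => opt (D.condKernel x)
  have hg₀ : Measurable g₀ := hopt.comp D.condKernel.measurable
  have hsplit {A B : X × Y → ℝ≥0∞} (hA : Measurable A) (hB : Measurable B) :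
      ∫⁻ z, A z ∂D + K * ∫⁻ z, B z ∂D = ∫⁻ x,
        (∫⁻ y, A (x, y) ∂D.condKernel x + K * ∫⁻ y, B (x, y) ∂D.condKernel x) ∂D.fst := by
    conv_lhs => rw [← D.disintegrate D.condKernel]
    rw [Measure.lintegral_compProd hA, Measure.lintegral_compProd hB,
      lintegral_add_left hA.lintegral_kernel_prod_right',
      lintegral_const_mul _ hB.lintegral_kernel_prod_right']
  have hfin : ∫⁻ z, ψ z.2 (g₀ z.1) ∂D ≠ ∞ :=
    ((lintegral_mono fun z : X × Y => hψopt z.2 _).trans_lt (by simpa using hC.lt_top)).ne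
  have hinf : (⨅ g : {g : X → U // Measurable g}, ∫⁻ z, ψ z.2 (g.1 z.1) ∂D) ≤
      ∫⁻ z, ψ z.2 (g₀ z.1) ∂D :=
    iInf_le_of_le ⟨g₀, hg₀⟩ le_rfl
  refine (ENNReal.sub_iInf_le_div_of_add_mul_le hfin hK0 hK fun h => ?_).trans
    (ENNReal.div_le_div_right (tsub_le_tsub_left hinf _) K)
  rw [hsplit (hψ.loss_comp hg₀) (hℓ.loss_comp (g := fun x => pred (f x)) (hpred.comp hf)),
    hsplit (hψ.loss_comp hf) (hℓ.loss_comp h.2)]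
  exact lintegral_mono fun x => hcal (D.condKernel x) (f x) (h.1 x)

noncomputable def unitClamp (v : ℝ) : ℝ := max (-1) (min 1 v)

lemma abs_unitClamp_le_one (v : ℝ) : |unitClamp v| ≤ 1 :=
  abs_le.2 ⟨le_max_left _ _, max_le (by norm_num) (min_le_left _ _)⟩

lemma unitClamp_mono : Monotone unitClamp :=
  fun _ _ h => max_le_max le_rfl (min_le_min le_rfl h)

lemma unitClamp_le {τ v : ℝ} (hτ : -1 ≤ τ) (h : v ≤ τ) : unitClamp v ≤ τ :=
  max_le hτ ((min_le_right _ _).trans h)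

lemma le_unitClamp {τ v : ℝ} (hτ : τ ≤ 1) (h : τ ≤ v) : τ ≤ unitClamp v :=
  le_max_of_le_right (le_min hτ h)

/-- The conditional hinge risk of the binary problem "is the label `i`?" when that label has
probability `p`. -/
noncomputable def binaryHingeRisk (p v : ℝ) : ℝ := p * max (1 - v) 0 + (1 - p) * max (1 + v) 0

lemma one_sub_unitClamp_mul_le_binaryHingeRisk {p : ℝ} (hp0 : 0 ≤ p) (hp1 : p ≤ 1) (v : ℝ) :
    1 - unitClamp v * (2 * p - 1) ≤ binaryHingeRisk p v := by
  unfold unitClamp binaryHingeRisk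
  rcases le_total v (-1) with hv | hv
  · rw [min_eq_right (by linarith), max_eq_left hv, max_eq_left (by linarith)]
    nlinarith [le_max_right (1 + v) 0]
  rcases le_total v 1 with hv1 | hv1
  · rw [min_eq_right hv1, max_eq_right hv, max_eq_left (by linarith), max_eq_left (by linarith)]
    linarith
  · rw [min_eq_left hv1, max_eq_right (by norm_num), max_eq_right (by linarith),
      max_eq_left (by linarith)]
    nlinarith

lemma binaryHingeRisk_sign (p : ℝ) :
    binaryHingeRisk p (if 1 / 2 < p then 1 else -1) = 1 - |2 * p - 1| := by
  unfold binaryHingeRisk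
  split_ifs with h
  · rw [abs_of_pos (by linarith)]; norm_num; ring
  · rw [abs_of_nonpos (by linarith)]; norm_num; ring

/-- With `s = 2 p - 1` and `c = unitClamp v`, a lower bound for the regret of `binaryHingeRisk p`
at `v`. -/
def hingeGap (s c : ℝ) : ℝ := |s| - c * s

lemma hingeGap_nonneg (s : ℝ) {c : ℝ} (hc : |c| ≤ 1) : 0 ≤ hingeGap s c := by
  unfold hingeGap
  nlinarith [abs_mul c s, le_abs_self (c * s), abs_nonneg s, abs_nonneg c]

lemma mul_le_hingeGap_of_le {τ c : ℝ} (s : ℝ) (hτ : |τ| ≤ 1) (hc : |c| ≤ 1)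
    (hcτ : c ≤ τ) : (1 - |τ|) * s ≤ hingeGap s c := by
  have := hingeGap_nonneg s hc
  unfold hingeGap at *
  rcases abs_cases s with ⟨hs, hs0⟩ | ⟨hs, hs0⟩
  · rw [hs]; nlinarith [le_abs_self τ]
  · nlinarith

lemma neg_mul_le_hingeGap_of_le {τ c : ℝ} (s : ℝ) (hτ : |τ| ≤ 1) (hc : |c| ≤ 1)
    (hτc : τ ≤ c) : -((1 - |τ|) * s) ≤ hingeGap s c := by
  have := mul_le_hingeGap_of_le (-s) (c := -c) (τ := -τ) (by rwa [abs_neg]) (by rwa [abs_neg])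
    (by linarith)
  simpa [hingeGap, abs_neg] using this

lemma mul_sub_le_hingeGap_add_hingeGap {τ s s' c c' : ℝ} (hτ : |τ| ≤ 1) (hc : |c| ≤ 1)
    (hc' : |c'| ≤ 1) (hτc : τ ≤ c) (hc'c : c' ≤ c) (hss' : s' + s ≤ 0) :
    (1 - |τ|) * (s' - s) ≤ hingeGap s c + hingeGap s' c' := by
  have hs := neg_mul_le_hingeGap_of_le s hτ hc hτc
  rcases le_or_gt s' 0 with hs' | hs'
  · nlinarith [hingeGap_nonneg s' hc', abs_nonneg τ]
  · have hs0 : s < 0 := by linarith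
    unfold hingeGap at *
    rw [abs_of_neg hs0, abs_of_pos hs']
    -- `c' ≤ c` and, as `s' + s ≤ 0`, `c (s' + s) ≤ -|τ| (s' + s)`
    nlinarith [neg_abs_le τ, abs_nonneg τ]

noncomputable def ovaBayesScore {n : ℕ} (q : Fin n → ℝ) : Fin n → ℝ :=
  fun i => if 1 / 2 < q i then 1 else -1

section ConditionalRisk

variable {n : ℕ} {q : Fin n → ℝ}

lemma sum_mul_psiOVA_eq (hq : ∑ i, q i = 1) (u : Fin n → ℝ) :
    ∑ y, q y * psiOVA n y u = ∑ i, binaryHingeRisk (q i) (u i) := by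
  have hψ : ∀ y, psiOVA n y u =
      max (1 - u y) 0 - max (1 + u y) 0 + ∑ i, max (1 + u i) 0 := fun y => by
    rw [psiOVA, ← Finset.add_sum_erase _ _ (Finset.mem_univ y)]; ring
  simp only [hψ, binaryHingeRisk, mul_add, Finset.sum_add_distrib, ← Finset.sum_mul, hq,
    one_mul, sub_mul, mul_sub, Finset.sum_sub_distrib]
  ring

lemma sum_mul_abstainLoss_last (hq : ∑ i, q i = 1) :
    ∑ y, q y * abstainLoss n (1 / 2) y (Fin.last n) = 1 / 2 := by
  simp [abstainLoss, ← Finset.sum_mul, hq]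

lemma sum_mul_abstainLoss_castSucc (hq : ∑ i, q i = 1) (j : Fin n) :
    ∑ y, q y * abstainLoss n (1 / 2) y j.castSucc = 1 - q j := by
  have hne : j.castSucc ≠ Fin.last n := (Fin.castSucc_lt_last j).ne
  simp only [abstainLoss, if_neg hne, Fin.val_castSucc, Fin.val_inj, mul_ite, mul_zero, mul_one]
  rw [Finset.sum_ite, Finset.sum_const_zero, zero_add, Finset.filter_ne,
    Finset.sum_erase_eq_sub (Finset.mem_univ j), hq]

lemma predOVA_cases (τ : ℝ) (u : Fin n → ℝ) :
    (predOVA n τ u = Fin.last n ∧ ∀ i, u i ≤ τ) ∨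
      ∃ j, predOVA n τ u = j.castSucc ∧ (∀ i, u i ≤ u j) ∧ τ < u j := by
  unfold predOVA
  split_ifs with h
  · refine .inr ⟨_, rfl, ?_⟩
    generalize_proofs hne
    exact (Finset.mem_filter.1 (Finset.min'_mem _ hne)).2
  · refine .inl ⟨rfl, fun i => ?_⟩
    have : Nonempty (Fin n) := ⟨i⟩
    obtain ⟨y, hy⟩ := Finite.exists_max u
    exact (hy i).trans (not_lt.1 fun hτ => h ⟨y, hy, hτ⟩)

lemma sum_hingeGap_le_sum_mul_psiOVA_sub (hq0 : ∀ i, 0 ≤ q i) (hq : ∑ i, q i = 1)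
    (u : Fin n → ℝ) :
    ∑ i, hingeGap (2 * q i - 1) (unitClamp (u i)) ≤
      ∑ y, q y * psiOVA n y u - ∑ y, q y * psiOVA n y (ovaBayesScore q) := by
  rw [sum_mul_psiOVA_eq hq, sum_mul_psiOVA_eq hq, ← Finset.sum_sub_distrib]
  refine Finset.sum_le_sum fun i _ => ?_
  have hq1 : q i ≤ 1 := hq ▸ Finset.single_le_sum (fun k _ => hq0 k) (Finset.mem_univ i)
  have := one_sub_unitClamp_mul_le_binaryHingeRisk (hq0 i) hq1 (u i)
  unfold ovaBayesScore hingeGap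
  rw [binaryHingeRisk_sign]
  linarith

lemma two_mul_sub_le_sum_hingeGap (hq0 : ∀ i, 0 ≤ q i) (hq : ∑ i, q i = 1)
    {τ : ℝ} (hτ : |τ| ≤ 1) (u : Fin n → ℝ) (t : Fin (n + 1)) :
    2 * (1 - |τ|) * (∑ y, q y * abstainLoss n (1 / 2) y (predOVA n τ u) -
        ∑ y, q y * abstainLoss n (1 / 2) y t) ≤
      ∑ i, hingeGap (2 * q i - 1) (unitClamp (u i)) := by
  obtain ⟨hτ0, hτ1⟩ := abs_le.1 hτ
  set e := fun i => hingeGap (2 * q i - 1) (unitClamp (u i))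
  have he : ∀ i ∈ Finset.univ, 0 ≤ e i :=
    fun i _ => hingeGap_nonneg _ (abs_unitClamp_le_one _)
  have hsingle : ∀ i, e i ≤ ∑ k, e k := fun i => Finset.single_le_sum he (Finset.mem_univ i)
  rcases predOVA_cases τ u with ⟨hpred, hle⟩ | ⟨j, hpred, hmax, hlt⟩ <;>
    rcases Fin.eq_castSucc_or_eq_last t with ⟨M, rfl⟩ | rfl <;>
    simp only [hpred, sum_mul_abstainLoss_last hq, sum_mul_abstainLoss_castSucc hq]
  · have := mul_le_hingeGap_of_le (2 * q M - 1) hτ (abs_unitClamp_le_one (u M))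
      (unitClamp_le hτ0 (hle M))
    linarith [hsingle M]
  · linarith [Finset.sum_nonneg he]
  · rcases eq_or_ne M j with rfl | hMj
    · linarith [Finset.sum_nonneg he]
    have hqMj : q M + q j ≤ 1 :=
      hq ▸ Finset.add_le_sum (fun k _ => hq0 k) (Finset.mem_univ M) (Finset.mem_univ j) hMj
    have := mul_sub_le_hingeGap_add_hingeGap (s := 2 * q j - 1) (s' := 2 * q M - 1) hτ
      (abs_unitClamp_le_one (u j)) (abs_unitClamp_le_one (u M)) (le_unitClamp hτ1 hlt.le)
      (unitClamp_mono (hmax M)) (by linarith)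
    linarith [Finset.add_le_sum he (Finset.mem_univ j) (Finset.mem_univ M) hMj.symm]
  · have := neg_mul_le_hingeGap_of_le (2 * q j - 1) hτ (abs_unitClamp_le_one (u j))
      (le_unitClamp hτ1 hlt.le)
    linarith [hsingle j]

lemma sum_mul_psiOVA_add_le (hq0 : ∀ i, 0 ≤ q i) (hq : ∑ i, q i = 1)
    {τ : ℝ} (hτ : |τ| ≤ 1) (u : Fin n → ℝ) (t : Fin (n + 1)) :
    ∑ y, q y * psiOVA n y (ovaBayesScore q) +
        2 * (1 - |τ|) * ∑ y, q y * abstainLoss n (1 / 2) y (predOVA n τ u) ≤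
      ∑ y, q y * psiOVA n y u + 2 * (1 - |τ|) * ∑ y, q y * abstainLoss n (1 / 2) y t := by
  linarith [sum_hingeGap_le_sum_mul_psiOVA_sub hq0 hq u, two_mul_sub_le_sum_hingeGap hq0 hq hτ u t]

end ConditionalRisk

lemma psiOVA_nonneg {n : ℕ} (y : Fin n) (u : Fin n → ℝ) : 0 ≤ psiOVA n y u := by
  unfold psiOVA; positivity

lemma abstainLoss_nonneg {n : ℕ} (y : Fin n) (t : Fin (n + 1)) :
    0 ≤ abstainLoss n (1 / 2) y t := by
  unfold abstainLoss; split_ifs <;> norm_num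

lemma psiOVA_le_of_abs_le_one {n : ℕ} (y : Fin n) {u : Fin n → ℝ} (hu : ∀ i, |u i| ≤ 1) :
    psiOVA n y u ≤ 2 * n := by
  have h2 : ∀ i, max (1 - u i) 0 ≤ 2 ∧ max (1 + u i) 0 ≤ 2 := fun i => by
    obtain ⟨h₁, h₂⟩ := abs_le.1 (hu i)
    exact ⟨max_le (by linarith) zero_le_two, max_le (by linarith) zero_le_two⟩
  calc psiOVA n y u ≤ 2 + ∑ i ∈ Finset.univ.erase y, 2 :=
        add_le_add (h2 y).1 (Finset.sum_le_sum fun i _ => (h2 i).2)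
    _ = 2 * n := by
      rw [Finset.add_sum_erase _ (fun _ => (2 : ℝ)) (Finset.mem_univ y)]; simp [mul_comm]

lemma lintegral_psiOVA_add_le {n : ℕ} (P : Measure (Fin n)) [IsProbabilityMeasure P]
    {τ : ℝ} (hτ : |τ| ≤ 1) (u : Fin n → ℝ) (t : Fin (n + 1)) :
    ∫⁻ y, ENNReal.ofReal (psiOVA n y (ovaBayesScore fun i => P.real {i})) ∂P +
        ENNReal.ofReal (2 * (1 - |τ|)) *
          ∫⁻ y, ENNReal.ofReal (abstainLoss n (1 / 2) y (predOVA n τ u)) ∂P ≤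
      ∫⁻ y, ENNReal.ofReal (psiOVA n y u) ∂P +
        ENNReal.ofReal (2 * (1 - |τ|)) *
          ∫⁻ y, ENNReal.ofReal (abstainLoss n (1 / 2) y t) ∂P := by
  have hK : 0 ≤ 2 * (1 - |τ|) := by linarith
  simp only [lintegral_ofReal_eq_ofReal_sum P fun y => psiOVA_nonneg y _,
    lintegral_ofReal_eq_ofReal_sum P fun y => abstainLoss_nonneg y _, ← ENNReal.ofReal_mul hK]
  have hψ (v : Fin n → ℝ) : 0 ≤ ∑ y, P.real {y} * psiOVA n y v :=
    Finset.sum_nonneg fun y _ => mul_nonneg measureReal_nonneg (psiOVA_nonneg y v)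
  have hℓ (s : Fin (n + 1)) :
      0 ≤ 2 * (1 - |τ|) * ∑ y, P.real {y} * abstainLoss n (1 / 2) y s :=
    mul_nonneg hK <| Finset.sum_nonneg fun y _ =>
      mul_nonneg measureReal_nonneg (abstainLoss_nonneg y s)
  rw [← ENNReal.ofReal_add (hψ _) (hℓ _), ← ENNReal.ofReal_add (hψ _) (hℓ _)]
  exact ENNReal.ofReal_le_ofReal (sum_mul_psiOVA_add_le (fun _ => measureReal_nonneg)
    (by simp) hτ u t)

lemma measurable_predOVA (n : ℕ) (τ : ℝ) : Measurable (predOVA n τ) := by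
  classical
  let sel : (Fin n → Prop) → Fin (n + 1) := fun p =>
    if h : ∃ y, p y then
      ((Finset.univ.filter p).min' (Finset.filter_nonempty_iff.2 (by simpa using h))).castSucc
    else Fin.last n
  have : predOVA n τ = sel ∘ fun u y => (∀ i, u i ≤ u y) ∧ τ < u y := by
    funext u; simp only [predOVA, sel, Function.comp]; congr!
  rw [this]
  refine (measurable_of_countable sel).comp (measurable_pi_lambda _ fun y => ?_)
  refine Measurable.and (Measurable.forall fun i => ?_) ?_
  · exact measurableSet_setOfPred.1 <|
      measurableSet_le (measurable_pi_apply i) (measurable_pi_apply y)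
  · exact measurableSet_setOfPred.1 <| measurableSet_lt measurable_const (measurable_pi_apply y)

lemma measurable_uncurry_psiOVA (n : ℕ) :
    Measurable (Function.uncurry fun y u => ENNReal.ofReal (psiOVA n y u)) :=
  measurable_from_prod_countable_right fun y =>
    (by unfold psiOVA; fun_prop : Continuous fun u => psiOVA n y u).measurable.ennreal_ofReal

lemma measurable_ovaBayesScore_measureReal (n : ℕ) :
    Measurable fun P : Measure (Fin n) => ovaBayesScore fun i => P.real {i} :=
  measurable_pi_lambda _ fun i => Measurable.ite (measurableSet_lt measurable_const
      (Measure.measurable_coe (measurableSet_singleton i)).ennreal_toReal)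
    measurable_const measurable_const

theorem psiOVA_excess_risk_bound_general (n : ℕ) (τ : ℝ) (hτ0 : -1 < τ) (hτ1 : τ < 1)
    {X : Type*} [MeasurableSpace X] (D : Measure (X × Fin n)) [IsProbabilityMeasure D]
    (f : X → Fin n → ℝ) (hf : Measurable f) :
    (∫⁻ z, ENNReal.ofReal (abstainLoss n (1/2) z.2 (predOVA n τ (f z.1))) ∂D) -
      (⨅ h : {h : X → Fin (n + 1) // Measurable h},
        ∫⁻ z, ENNReal.ofReal (abstainLoss n (1/2) z.2 (h.1 z.1)) ∂D) ≤
    ((∫⁻ z, ENNReal.ofReal (psiOVA n z.2 (f z.1)) ∂D) -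
      (⨅ g : {g : X → Fin n → ℝ // Measurable g},
        ∫⁻ z, ENNReal.ofReal (psiOVA n z.2 (g.1 z.1)) ∂D)) /
      ENNReal.ofReal (2 * (1 - |τ|)) := by
  have hτ : |τ| < 1 := abs_lt.2 ⟨hτ0, hτ1⟩
  have hbayes (P : Measure (Fin n)) (i : Fin n) :
      |ovaBayesScore (fun i => P.real {i}) i| ≤ 1 := by
    unfold ovaBayesScore; split_ifs <;> simp
  exact excess_risk_le_div_of_pointwise D (fun y t => ENNReal.ofReal (abstainLoss n (1/2) y t))
    (fun y u => ENNReal.ofReal (psiOVA n y u)) (measurable_of_countable _)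
    (measurable_uncurry_psiOVA n) (predOVA n τ) (measurable_predOVA n τ) _
    (measurable_ovaBayesScore_measureReal n) ENNReal.ofReal_ne_top
    (fun y P => ENNReal.ofReal_le_ofReal (psiOVA_le_of_abs_le_one y (hbayes P)))
    (ENNReal.ofReal_pos.2 (by linarith)).ne' ENNReal.ofReal_ne_top
    (fun P _ => lintegral_psiOVA_add_le P hτ.le) f hf

theorem psiOVA_excess_risk_bound (n : ℕ) (hn : 2 ≤ n) (τ : ℝ) (hτ0 : -1 < τ) (hτ1 : τ < 1)
    {X : Type*} [MeasurableSpace X] (D : Measure (X × Fin n)) [IsProbabilityMeasure D]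
    (f : X → Fin n → ℝ) (hf : Measurable f) :
    (∫⁻ z, ENNReal.ofReal (abstainLoss n (1/2) z.2 (predOVA n τ (f z.1))) ∂D) -
      (⨅ h : {h : X → Fin (n + 1) // Measurable h},
        ∫⁻ z, ENNReal.ofReal (abstainLoss n (1/2) z.2 (h.1 z.1)) ∂D) ≤
    ((∫⁻ z, ENNReal.ofReal (psiOVA n z.2 (f z.1)) ∂D) -
      (⨅ g : {g : X → Fin n → ℝ // Measurable g},
        ∫⁻ z, ENNReal.ofReal (psiOVA n z.2 (g.1 z.1)) ∂D)) /
      ENNReal.ofReal (2 * (1 - |τ|)) :=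
  psiOVA_excess_risk_bound_general n τ hτ0 hτ1 D f hf
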